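/- arXiv:1511.06057 — 7 statements merged into one kernel-verified Lean document; each statement's English description precedes it below -/
import Mathlib

section
/- Let m ≥ 1, let λ, τ be real numbers, let M be an m×m matrix of differentiable real-valued functions of a real variable c, and let μ⃗ : ℝ → ℝ^m be componentwise differentiable and satisfy M(c)·μ⃗(c) = (λ + τc)·c·μ⃗'(c) for all c. Let μ : ℕ → (ℝ → ℝ) be a sequence of differentiable functions with μ₀(c) equal to the first component of μ⃗(c) and μ_{n+1}(c) = c·μ_n'(c) for all n ∈ ℕ and all c. Let P⃗ : ℕ → (ℝ → ℝ^m) be a sequence of componentwise differentiable vector functions with P⃗₀(c) = e₀ (the first standard basis vector) for all c, and P⃗_{n+1}(c) = c(λ + τc)·P⃗_n'(c) + (M(c)ᵀ − nτc·I)·P⃗_n(c) for all n and c, where I is the m×m identity matrix. Then for every n ∈ ℕ and every real c with λ + τc ≠ 0, μ_n(c) = (λ + τc)^{−n} · ⟨P⃗_n(c), μ⃗(c)⟩, where ⟨·,·⟩ is the standard dot product on ℝ^m. -/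
open Matrix Filter Topology

/-!
Write `a(c) = λ + τc` and `F_n(c) = ⟨P⃗_n(c), μ⃗(c)⟩`. Moving `Mᵀ` across the dot product and using
`M μ⃗ = a c μ⃗'` turns the recurrence for `P⃗_n` into `F_{n+1} = c a F_n' - nτc F_n`. This is exactly
what `μ_{n+1} = c (a^{-n} F_n)'` produces after multiplying by `a^{n+1}`, so the formula
propagates by induction on `n`, differentiating `μ_n` near any point where `a ≠ 0`.
-/

theorem HasDerivAt.dotProduct {𝕜 ι : Type*} [NontriviallyNormedField 𝕜] [Fintype ι]
    {u v : 𝕜 → ι → 𝕜} {u' v' : ι → 𝕜} {c : 𝕜}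
    (hu : ∀ i, HasDerivAt (fun t => u t i) (u' i) c)
    (hv : ∀ i, HasDerivAt (fun t => v t i) (v' i) c) :
    HasDerivAt (fun t => u t ⬝ᵥ v t) (u' ⬝ᵥ v c + u c ⬝ᵥ v') c := by
  have hsum := HasDerivAt.fun_sum fun i (_ : i ∈ Finset.univ) => (hu i).mul (hv i)
  rw [Finset.sum_add_distrib] at hsum
  exact hsum

theorem HasDerivAt.zpow_neg_mul {𝕜 : Type*} [NontriviallyNormedField 𝕜]
    {a F : 𝕜 → 𝕜} {a' F' c : 𝕜} (n : ℕ) (ha : HasDerivAt a a' c) (hF : HasDerivAt F F' c)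
    (hc : a c ≠ 0) :
    HasDerivAt (fun t => a t ^ (-(n : ℤ)) * F t)
      (a c ^ (-((n + 1 : ℕ) : ℤ)) * (a c * F' - n * a' * F c)) c := by
  refine (((hasDerivAt_zpow (-(n : ℤ)) (a c) (Or.inl hc)).comp c ha).mul hF).congr_deriv ?_
  have hsucc : -((n + 1 : ℕ) : ℤ) = -(n : ℤ) - 1 := by push_cast; ring
  rw [hsucc, zpow_sub_one₀ hc, Function.comp_apply]
  push_cast
  field_simp
  ring

theorem transpose_recurrence_dotProduct {R ι : Type*} [CommRing R] [Fintype ι]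
    (A : Matrix ι ι R) (p p' v v' : ι → R) (a c k : R) (hA : A *ᵥ v = (a * c) • v') :
    ((c * a) • p' + (Aᵀ *ᵥ p - k • p)) ⬝ᵥ v = c * a * (p' ⬝ᵥ v + p ⬝ᵥ v') - k * (p ⬝ᵥ v) := by
  rw [add_dotProduct, sub_dotProduct, smul_dotProduct, smul_dotProduct, mulVec_transpose,
    ← dotProduct_mulVec, hA, dotProduct_smul]
  simp only [smul_eq_mul]
  ring

theorem moments_eq_polynomial_combination_general
    (m : ℕ) (hm : 1 ≤ m) (lam tau : ℝ)
    (M : ℝ → Matrix (Fin m) (Fin m) ℝ)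
    (muv : ℝ → Fin m → ℝ)
    (hmuv : ∀ i : Fin m, Differentiable ℝ fun c => muv c i)
    (hMmu : ∀ (c : ℝ) (i : Fin m),
      (M c *ᵥ muv c) i = (lam + tau * c) * c * deriv (fun t => muv t i) c)
    (mu : ℕ → ℝ → ℝ)
    (hmu0 : ∀ c : ℝ, mu 0 c = muv c ⟨0, hm⟩)
    (hmurec : ∀ (n : ℕ) (c : ℝ), mu (n + 1) c = c * deriv (mu n) c)
    (P : ℕ → ℝ → Fin m → ℝ)
    (hPd : ∀ (n : ℕ) (i : Fin m), Differentiable ℝ fun c => P n c i)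
    (hP0 : ∀ (c : ℝ) (i : Fin m), P 0 c i = if i = ⟨0, hm⟩ then 1 else 0)
    (hPrec : ∀ (n : ℕ) (c : ℝ) (i : Fin m),
      P (n + 1) c i =
        c * (lam + tau * c) * deriv (fun t => P n t i) c +
          (((M c)ᵀ *ᵥ P n c) i - (n : ℝ) * tau * c * P n c i)) :
    ∀ (n : ℕ) (c : ℝ), lam + tau * c ≠ 0 →
      mu n c = (lam + tau * c) ^ (-(n : ℤ)) * (P n c ⬝ᵥ muv c) := by
  intro n
  induction n with
  | zero => intro c _; simp [hmu0, dotProduct, hP0]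
  | succ n ih =>
    intro c hc
    set P' : Fin m → ℝ := fun i => deriv (fun t => P n t i) c
    set muv' : Fin m → ℝ := fun i => deriv (fun t => muv t i) c
    have hmu_near : mu n =ᶠ[𝓝 c] fun t => (lam + tau * t) ^ (-(n : ℤ)) * (P n t ⬝ᵥ muv t) := by
      have hcont : ContinuousAt (fun t : ℝ => lam + tau * t) c := by fun_prop
      filter_upwards [hcont.eventually_ne hc] with t ht using ih t ht
    have hF : HasDerivAt (fun t => P n t ⬝ᵥ muv t) (P' ⬝ᵥ muv c + P n c ⬝ᵥ muv') c :=
      .dotProduct (fun i => (hPd n i).differentiableAt.hasDerivAt)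
        (fun i => (hmuv i).differentiableAt.hasDerivAt)
    have ha : HasDerivAt (fun t : ℝ => lam + tau * t) tau c := by
      simpa using ((hasDerivAt_id c).const_mul tau).const_add lam
    have hnext : P (n + 1) c ⬝ᵥ muv c =
        c * (lam + tau * c) * (P' ⬝ᵥ muv c + P n c ⬝ᵥ muv') - n * tau * c * (P n c ⬝ᵥ muv c) := by
      have hvec : P (n + 1) c =
          (c * (lam + tau * c)) • P' + ((M c)ᵀ *ᵥ P n c - (n * tau * c) • P n c) :=
        funext fun i => by simp [hPrec, P']
      rw [hvec]
      exact transpose_recurrence_dotProduct _ _ _ _ _ _ _ _ (funext fun i => by simp [hMmu, muv'])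
    rw [hmurec, hmu_near.deriv_eq, (ha.zpow_neg_mul n hF hc).deriv, hnext]
    ring

/-- Proposition 2.1 (main result). If the moment vector satisfies
`M(c) ⬝ μ⃗(c) = (λ + τc)·c·μ⃗'(c)`, the moments satisfy `μ_{n+1} = c μ_n'` with
`μ_0` the first component of `μ⃗`, and the vector polynomials `P⃗_n` satisfy the
differential-difference recurrence, then
`μ_n(c) = (λ + τc)^{-n} ⟨P⃗_n(c), μ⃗(c)⟩` whenever `λ + τc ≠ 0`. -/
theorem moments_eq_polynomial_combination
    (m : ℕ) (hm : 1 ≤ m) (lam tau : ℝ)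
    (M : ℝ → Matrix (Fin m) (Fin m) ℝ)
    (hM : ∀ i j : Fin m, Differentiable ℝ fun c => M c i j)
    (muv : ℝ → Fin m → ℝ)
    (hmuv : ∀ i : Fin m, Differentiable ℝ fun c => muv c i)
    (hMmu : ∀ (c : ℝ) (i : Fin m),
      (M c *ᵥ muv c) i = (lam + tau * c) * c * deriv (fun t => muv t i) c)
    (mu : ℕ → ℝ → ℝ)
    (hmud : ∀ n, Differentiable ℝ (mu n))
    (hmu0 : ∀ c : ℝ, mu 0 c = muv c ⟨0, hm⟩)
    (hmurec : ∀ (n : ℕ) (c : ℝ), mu (n + 1) c = c * deriv (mu n) c)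
    (P : ℕ → ℝ → Fin m → ℝ)
    (hPd : ∀ (n : ℕ) (i : Fin m), Differentiable ℝ fun c => P n c i)
    (hP0 : ∀ (c : ℝ) (i : Fin m), P 0 c i = if i = ⟨0, hm⟩ then 1 else 0)
    (hPrec : ∀ (n : ℕ) (c : ℝ) (i : Fin m),
      P (n + 1) c i =
        c * (lam + tau * c) * deriv (fun t => P n t i) c +
          (((M c)ᵀ *ᵥ P n c) i - (n : ℝ) * tau * c * P n c i)) :
    ∀ (n : ℕ) (c : ℝ), lam + tau * c ≠ 0 →
      mu n c = (lam + tau * c) ^ (-(n : ℤ)) * (P n c ⬝ᵥ muv c) :=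
  moments_eq_polynomial_combination_general m hm lam tau M muv hmuv hMmu mu hmu0 hmurec P hPd hP0
    hPrec
end

section
/- Let a : ℕ → ℝ be a sequence such that the power series Σ_{x=0}^∞ a_x c^x has radius of convergence R > 0, and for each n ∈ ℕ define μ_n(c) = Σ_{x=0}^∞ x^n a_x c^x. Then for all real numbers c and w with |c|·e^{|w|} < R, the series Σ_{n=0}^∞ μ_n(c)·w^n/n! converges and equals μ₀(c·e^w). -/
/-!
Writing `(c e^w)^x = c^x Σ_n (x w)^n / n!`, the quantity `μ₀(c e^w)` becomes the double series
`Σ_x Σ_n x^n a_x c^x w^n / n!`. Its absolute values sum to `Σ_x |a_x| (|c| e^{|w|})^x`, which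
converges by comparison with a geometric series because `|c| e^{|w|}` lies below the radius of
convergence. So the order of summation may be exchanged, and summing over `x` first gives
`Σ_n μ_n(c) w^n / n!`.
-/

open scoped ENNReal NNReal

open Real

noncomputable def moment (a : ℕ → ℝ) (n : ℕ) (c : ℝ) : ℝ :=
  ∑' x : ℕ, (x : ℝ) ^ n * a x * c ^ x

theorem summable_abs_mul_pow_of_bounded {a : ℕ → ℝ} {r C t : ℝ} (hC : ∀ x, |a x| * r ^ x ≤ C)
    (ht : 0 ≤ t) (htr : t < r) : Summable fun x => |a x| * t ^ x := by
  have hr : 0 < r := ht.trans_lt htr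
  refine .of_nonneg_of_le (fun x => by positivity) (fun x => ?_)
    ((summable_geometric_of_lt_one (div_nonneg ht hr.le) ((div_lt_one hr).2 htr)).mul_left C)
  calc |a x| * t ^ x = |a x| * r ^ x * (t / r) ^ x := by
        rw [div_pow, mul_assoc, mul_div_cancel₀ _ (pow_ne_zero x hr.ne')]
    _ ≤ C * (t / r) ^ x := by gcongr; exact hC x

theorem summable_abs_mul_pow_of_ofReal_lt_iSup {a : ℕ → ℝ} {t : ℝ} (ht : 0 ≤ t)
    (htR : ENNReal.ofReal t <
      ⨆ (r : ℝ≥0) (_ : ∃ C : ℝ, ∀ x : ℕ, |a x| * (r : ℝ) ^ x ≤ C), (r : ℝ≥0∞)) :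
    Summable fun x => |a x| * t ^ x := by
  obtain ⟨r, hr⟩ := lt_iSup_iff.1 htR
  obtain ⟨⟨C, hC⟩, htr⟩ := lt_iSup_iff.1 hr
  rw [← ENNReal.ofReal_coe_nnreal, ENNReal.ofReal_lt_ofReal_iff'] at htr
  exact summable_abs_mul_pow_of_bounded hC ht htr.1

theorem hasSum_pow_mul_mul_pow_mul_div_factorial (x : ℕ) (b c w : ℝ) :
    HasSum (fun n : ℕ => (x : ℝ) ^ n * b * c ^ x * (w ^ n / n.factorial))
      (b * (c * exp w) ^ x) := by
  have hterm : (fun n : ℕ => (x : ℝ) ^ n * b * c ^ x * (w ^ n / n.factorial)) =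
      fun n => b * c ^ x * ((x * w) ^ n / n.factorial) := by
    ext n; rw [mul_pow]; ring
  have hexp : HasSum (fun n : ℕ => (x * w) ^ n / n.factorial) (exp (x * w)) := by
    rw [exp_eq_exp_ℝ]; exact NormedSpace.expSeries_div_hasSum_exp _
  rw [hterm, mul_pow, ← mul_assoc, ← exp_nat_mul]
  exact hexp.mul_left _

theorem summable_uncurry_pow_mul_mul_pow_mul_div_factorial {a : ℕ → ℝ} {c w : ℝ}
    (ha : Summable fun x => |a x| * (|c| * exp |w|) ^ x) :
    Summable (Function.uncurry fun (x n : ℕ) =>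
      (x : ℝ) ^ n * a x * c ^ x * (w ^ n / n.factorial)) := by
  have hrow x := hasSum_pow_mul_mul_pow_mul_div_factorial x |a x| |c| |w|
  refine summable_abs_iff.mp <| (summable_prod_of_nonneg fun _ => abs_nonneg _).2
    ⟨fun x => ?_, ?_⟩
  · simpa [abs_mul, abs_div, abs_pow] using (hrow x).summable
  · simpa [abs_mul, abs_div, abs_pow, (hrow _).tsum_eq] using ha

theorem hasSum_moment_mul_pow_div_factorial {a : ℕ → ℝ} {c w : ℝ}
    (ha : Summable fun x => |a x| * (|c| * exp |w|) ^ x) :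
    HasSum (fun n : ℕ => moment a n c * w ^ n / n.factorial) (moment a 0 (c * exp w)) := by
  set f : ℕ → ℕ → ℝ := fun x n => (x : ℝ) ^ n * a x * c ^ x * (w ^ n / n.factorial)
  have hf : Summable (Function.uncurry f) :=
    summable_uncurry_pow_mul_mul_pow_mul_div_factorial ha
  have hcols : HasSum (fun n => ∑' x, f x n) (∑' n, ∑' x, f x n) := hf.prod_symm.prod.hasSum
  rw [hf.tsum_comm] at hcols
  simp only [f, (hasSum_pow_mul_mul_pow_mul_div_factorial _ _ _ _).tsum_eq, tsum_mul_right]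
    at hcols
  simpa only [moment, pow_zero, one_mul, mul_div_assoc] using hcols

theorem moments_exponential_generating_function_general
    (a : ℕ → ℝ) (R : ℝ≥0∞)
    (hR : R = ⨆ (r : ℝ≥0) (_ : ∃ C : ℝ, ∀ x : ℕ, |a x| * (r : ℝ) ^ x ≤ C), (r : ℝ≥0∞))
    (mu : ℕ → ℝ → ℝ)
    (hmu : ∀ (n : ℕ) (c : ℝ), mu n c = ∑' x : ℕ, (x : ℝ) ^ n * a x * c ^ x) :
    ∀ c w : ℝ, ENNReal.ofReal (|c| * Real.exp |w|) < R →
      HasSum (fun n : ℕ => mu n c * w ^ n / n.factorial) (mu 0 (c * Real.exp w)) := by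
  intro c w hcw
  rw [hR] at hcw
  obtain rfl : mu = moment a := funext₂ hmu
  exact hasSum_moment_mul_pow_div_factorial
    (summable_abs_mul_pow_of_ofReal_lt_iSup (by positivity) hcw)

/-- Exponential generating function of the moments:
`Σ_n μ_n(c) w^n/n! = μ_0(c e^w)` whenever `|c| e^{|w|} < R`. -/
theorem moments_exponential_generating_function
    (a : ℕ → ℝ) (R : ℝ≥0∞)
    (hR : R = ⨆ (r : ℝ≥0) (_ : ∃ C : ℝ, ∀ x : ℕ, |a x| * (r : ℝ) ^ x ≤ C), (r : ℝ≥0∞))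
    (hRpos : 0 < R)
    (mu : ℕ → ℝ → ℝ)
    (hmu : ∀ (n : ℕ) (c : ℝ), mu n c = ∑' x : ℕ, (x : ℝ) ^ n * a x * c ^ x) :
    ∀ c w : ℝ, ENNReal.ofReal (|c| * Real.exp |w|) < R →
      HasSum (fun n : ℕ => mu n c * w ^ n / n.factorial) (mu 0 (c * Real.exp w)) :=
  moments_exponential_generating_function_general a R hR mu hmu
end

section
/- Let α > 0 and 0 < c < 1. For every n ∈ ℕ, the n-th moment of the Meixner weight satisfies Σ_{x=0}^∞ x^n·(α)_x·c^x/x! = Σ_{k=0}^n S(n,k)·(α)_k·c^k·(1−c)^{−α−k}, where the series on the left converges absolutely and (1−c)^{−α−k} denotes the real power. -/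
/-!
Newton's forward-difference formula at `0` for `r ↦ r ^ n` gives
`x ^ n = ∑ₖ S(n,k) x(x-1)⋯(x-k+1)`, since `k! S(n,k)` is the `k`-th forward difference of
`r ↦ r ^ n` at `0`. This reduces the moments to the factorial moments. After the shift
`x ↦ x + k`, the `k`-th factorial moment is `(α)ₖ cᵏ` times the binomial series
`∑ᵧ (α+k)ᵧ cʸ / y! = (1 - c)^(-α-k)`.
-/

/-- The Pochhammer symbol (rising factorial) `(a)_x = a (a+1) ⋯ (a+x-1)`. -/
def poch (a : ℝ) (x : ℕ) : ℝ := ∏ i ∈ Finset.range x, (a + i)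

/-- The Stirling numbers of the second kind,
`S(n,k) = (1/k!) Σ_{j=0}^k C(k,j) (-1)^{k-j} j^n`. -/
noncomputable def stirling2 (n k : ℕ) : ℝ :=
  (1 / k.factorial) *
    ∑ j ∈ Finset.range (k + 1), (k.choose j : ℝ) * (-1 : ℝ) ^ (k - j) * (j : ℝ) ^ n

open Finset Polynomial fwdDiff

lemma poch_eq_eval_ascPochhammer (a : ℝ) (x : ℕ) : poch a x = (ascPochhammer ℝ x).eval a := by
  induction x with
  | zero => simp [poch]
  | succ x ih => rw [poch, prod_range_succ, ← poch, ih, ascPochhammer_succ_eval]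

lemma poch_add (a : ℝ) (k x : ℕ) : poch a (k + x) = poch a k * poch (a + k) x := by
  rw [poch, prod_range_add]
  exact congrArg _ (prod_congr rfl fun i _ => by push_cast; ring)

lemma poch_div_factorial_eq_choose (a : ℝ) (x : ℕ) :
    poch a x / x.factorial = Ring.choose (a + x - 1) x := by
  symm
  rw [Ring.choose_eq_smul, descPochhammer_smeval_eq_ascPochhammer, ascPochhammer_smeval_eq_eval,
    poch_eq_eval_ascPochhammer, smul_eq_mul, inv_mul_eq_div]
  ring_nf

lemma hasSum_poch_mul_pow_div_factorial (a : ℝ) {c : ℝ} (hc : |c| < 1) :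
    HasSum (fun x : ℕ => poch a x * c ^ x / x.factorial) ((1 - c) ^ (-a)) := by
  have hc' : c ∈ Metric.eball (0 : ℝ) 1 := by
    rw [Metric.mem_eball, edist_zero_right, enorm_eq_nnnorm]
    exact_mod_cast hc
  have := (Real.one_div_one_sub_rpow_hasFPowerSeriesOnBall_zero a).hasSum hc'
  simp only [FormalMultilinearSeries.ofScalars_apply_eq, ← poch_div_factorial_eq_choose,
    smul_eq_mul, zero_add] at this
  have h1c : 0 ≤ 1 - c := by linarith [le_abs_self c]
  rw [Real.rpow_neg h1c, inv_eq_one_div]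
  simpa only [div_mul_eq_mul_div] using this

lemma descFactorial_add_div_factorial (k x : ℕ) :
    ((x + k).descFactorial k : ℝ) / (x + k).factorial = 1 / x.factorial := by
  have h := Nat.factorial_mul_descFactorial (Nat.le_add_left k x)
  rw [Nat.add_sub_cancel] at h
  rw [div_eq_div_iff (by positivity) (by positivity), ← h]
  push_cast
  ring

lemma hasSum_descFactorial_mul_poch_mul_pow_div_factorial (a : ℝ) {c : ℝ} (hc : |c| < 1)
    (k : ℕ) :
    HasSum (fun x : ℕ => (x.descFactorial k : ℝ) * poch a x * c ^ x / x.factorial)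
      (poch a k * c ^ k * (1 - c) ^ (-a - k)) := by
  have vanish : ∑ x ∈ range k, (x.descFactorial k : ℝ) * poch a x * c ^ x / x.factorial = 0 :=
    sum_eq_zero fun x hx => by simp [Nat.descFactorial_eq_zero_iff_lt.mpr (mem_range.mp hx)]
  rw [← hasSum_nat_add_iff' k, vanish, sub_zero, ← neg_add']
  have hterm (x : ℕ) : ((x + k).descFactorial k : ℝ) * poch a (x + k) * c ^ (x + k) /
      (x + k).factorial = poch a k * c ^ k * (poch (a + k) x * c ^ x / x.factorial) := by
    rw [add_comm x k, poch_add, pow_add, mul_div_right_comm,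
      mul_div_right_comm ((k + x).descFactorial k : ℝ), add_comm k x,
      descFactorial_add_div_factorial]
    ring
  simpa only [hterm] using
    (hasSum_poch_mul_pow_div_factorial (a + k) hc).mul_left (poch a k * c ^ k)

lemma factorial_mul_stirling2 (n k : ℕ) :
    k.factorial * stirling2 n k = (Δ_[1])^[k] (fun r : ℝ => r ^ n) 0 := by
  rw [fwdDiff_iter_eq_sum_shift, stirling2, ← mul_assoc, mul_one_div_cancel (by positivity),
    one_mul]
  refine sum_congr rfl fun j _ => ?_
  simp only [zero_add, nsmul_eq_mul, mul_one, zsmul_eq_mul]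
  push_cast
  ring

lemma stirling2_eq_zero_of_lt {n k : ℕ} (h : n < k) : stirling2 n k = 0 := by
  have := factorial_mul_stirling2 n k
  rw [fwdDiff_iter_pow_eq_zero_of_lt h, Pi.zero_apply] at this
  exact (mul_eq_zero.mp this).resolve_left (by positivity)

lemma sum_stirling2_mul_descFactorial (n m : ℕ) :
    ∑ k ∈ range (n + 1), stirling2 n k * m.descFactorial k = (m : ℝ) ^ n := by
  have newton := shift_eq_sum_fwdDiff_iter 1 (fun r : ℝ => r ^ n) m 0
  simp only [zero_add, nsmul_eq_mul, mul_one, ← factorial_mul_stirling2] at newton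
  have hterm (k : ℕ) : stirling2 n k * m.descFactorial k =
      m.choose k * (k.factorial * stirling2 n k) := by
    rw [Nat.descFactorial_eq_factorial_mul_choose]
    push_cast
    ring
  rw [newton]
  simp only [hterm]
  have extend (N : ℕ) (hN : N ≤ n + m)
      (hvanish : ∀ k, N < k → (m.choose k : ℝ) * (k.factorial * stirling2 n k) = 0) :
      ∑ k ∈ range (N + 1), (m.choose k : ℝ) * (k.factorial * stirling2 n k) =
        ∑ k ∈ range (n + m + 1), (m.choose k : ℝ) * (k.factorial * stirling2 n k) :=
    sum_subset (range_subset_range.mpr (by omega)) fun k _ hk =>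
      hvanish k (by simpa using hk)
  rw [extend n (by omega) fun k hk => by rw [stirling2_eq_zero_of_lt hk, mul_zero, mul_zero],
    extend m (by omega) fun k hk => by rw [Nat.choose_eq_zero_of_lt hk, Nat.cast_zero, zero_mul]]

theorem meixner_moments_general (α c : ℝ) (hc : 0 < c) (hc1 : c < 1) (n : ℕ) :
    Summable (fun x : ℕ => |(x : ℝ) ^ n * poch α x * c ^ x / x.factorial|) ∧
    ∑' x : ℕ, (x : ℝ) ^ n * poch α x * c ^ x / x.factorial =
      ∑ k ∈ Finset.range (n + 1),
        stirling2 n k * poch α k * c ^ k * (1 - c) ^ (-α - (k : ℝ)) := by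
  have hc' : |c| < 1 := abs_lt.mpr ⟨by linarith, hc1⟩
  have hterm (x : ℕ) : (x : ℝ) ^ n * poch α x * c ^ x / x.factorial =
      ∑ k ∈ range (n + 1), stirling2 n k *
        ((x.descFactorial k : ℝ) * poch α x * c ^ x / x.factorial) := by
    simp only [← sum_stirling2_mul_descFactorial n x, sum_mul, sum_div]
    exact sum_congr rfl fun k _ => by ring
  have moments : HasSum (fun x : ℕ => (x : ℝ) ^ n * poch α x * c ^ x / x.factorial)
      (∑ k ∈ range (n + 1), stirling2 n k * poch α k * c ^ k * (1 - c) ^ (-α - (k : ℝ))) := by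
    simp only [hterm, mul_assoc (stirling2 n _)]
    exact hasSum_sum fun k _ =>
      (hasSum_descFactorial_mul_poch_mul_pow_div_factorial α hc' k).mul_left _
  exact ⟨moments.summable.abs, moments.tsum_eq⟩

/-- The moments of the Meixner weight:
`Σ_x x^n (α)_x c^x/x! = Σ_{k=0}^n S(n,k) (α)_k c^k (1-c)^{-α-k}`. -/
theorem meixner_moments (α c : ℝ) (hα : 0 < α) (hc : 0 < c) (hc1 : c < 1) (n : ℕ) :
    Summable (fun x : ℕ => |(x : ℝ) ^ n * poch α x * c ^ x / x.factorial|) ∧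
    ∑' x : ℕ, (x : ℝ) ^ n * poch α x * c ^ x / x.factorial =
      ∑ k ∈ Finset.range (n + 1),
        stirling2 n k * poch α k * c ^ k * (1 - c) ^ (-α - (k : ℝ)) :=
  meixner_moments_general α c hc hc1 n
end

section
/- Let α > 0, 0 < c < 1, and let w be a real number with c·e^{|w|} < 1. Then the exponential generating function of the moments of the Meixner weight satisfies Σ_{n=0}^∞ μ_n(c)·w^n/n! = (1 − c·e^w)^{−α}, where μ_n(c) = Σ_{x=0}^∞ x^n·(α)_x·c^x/x! and (1 − c·e^w)^{−α} denotes the real power. -/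
/-!
Expanding `exp (x * w) = ∑ₙ (x * w) ^ n / n!` inside `∑ₓ ρ x * exp (x * w)` and exchanging the
two sums turns the moment generating series into `∑ₓ (α)ₓ (c eʷ)ˣ / x!`; the exchange is legitimate
because the double series converges absolutely as soon as `c e^|w| < 1`. The remaining series is
the binomial series of `(1 - c eʷ) ^ (-α)`, whose coefficients `Ring.choose (α + x - 1) x` are
`(α)ₓ / x!`.
-/

open Real

theorem poch_eq_ascPochhammer_eval (a : ℝ) (n : ℕ) : poch a n = (ascPochhammer ℝ n).eval a := by
  induction n with
  | zero => simp [poch]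
  | succ n ih => rw [poch, Finset.prod_range_succ, ← poch, ih, ascPochhammer_succ_eval]

theorem choose_add_sub_one_eq_poch_div_factorial (a : ℝ) (n : ℕ) :
    Ring.choose (a + n - 1) n = poch a n / n.factorial := by
  rw [← Ring.multichoose_eq, poch_eq_ascPochhammer_eval, ← Polynomial.ascPochhammer_smeval_eq_eval,
    ← Ring.factorial_nsmul_multichoose_eq_ascPochhammer, nsmul_eq_mul]
  field_simp

theorem ofScalars_choose_add_sub_one_apply (a t : ℝ) (n : ℕ) :
    FormalMultilinearSeries.ofScalars ℝ (fun n ↦ Ring.choose (a + n - 1) n) n (fun _ ↦ t) =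
      poch a n * t ^ n / n.factorial := by
  rw [FormalMultilinearSeries.ofScalars_apply_eq, choose_add_sub_one_eq_poch_div_factorial,
    smul_eq_mul]
  ring

theorem mem_eball_zero_one_of_abs_lt {t : ℝ} (ht : |t| < 1) : t ∈ Metric.eball (0 : ℝ) 1 := by
  simpa [enorm_eq_nnnorm, ← NNReal.coe_lt_coe] using ht

theorem hasSum_poch_mul_pow_div_factorial_s9 (a : ℝ) {t : ℝ} (ht : |t| < 1) :
    HasSum (fun n ↦ poch a n * t ^ n / n.factorial) ((1 - t) ^ (-a)) := by
  have h := (one_div_one_sub_rpow_hasFPowerSeriesOnBall_zero a).hasSum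
    (mem_eball_zero_one_of_abs_lt ht)
  simp only [ofScalars_choose_add_sub_one_apply, zero_add] at h
  rwa [rpow_neg (by linarith [(abs_lt.mp ht).2]), ← one_div]

theorem summable_abs_poch_mul_pow_div_factorial (a : ℝ) {t : ℝ} (ht : |t| < 1) :
    Summable fun n ↦ |poch a n * t ^ n / n.factorial| := by
  have hf := one_div_one_sub_rpow_hasFPowerSeriesOnBall_zero a
  simpa only [ofScalars_choose_add_sub_one_apply, norm_eq_abs] using
    FormalMultilinearSeries.summable_norm_apply _
      (Metric.eball_subset_eball hf.r_le (mem_eball_zero_one_of_abs_lt ht))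

theorem hasSum_pow_div_factorial (x : ℝ) : HasSum (fun n ↦ x ^ n / n.factorial) (exp x) := by
  simpa only [exp_eq_exp_ℝ] using NormedSpace.expSeries_div_hasSum_exp x

theorem hasSum_tsum_moment_mul_pow_div_factorial {ρ : ℕ → ℝ} {w : ℝ}
    (hρ : Summable fun x : ℕ ↦ |ρ x| * exp (x * |w|)) :
    HasSum (fun n ↦ (∑' x : ℕ, (x : ℝ) ^ n * ρ x) * w ^ n / n.factorial)
      (∑' x : ℕ, ρ x * exp (x * w)) := by
  set f : ℕ × ℕ → ℝ := fun p ↦ ρ p.1 * ((p.1 * w) ^ p.2 / p.2.factorial)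
  have habs_fibre (x : ℕ) : HasSum (fun n ↦ |f (x, n)|) (|ρ x| * exp (x * |w|)) := by
    have h_abs (n : ℕ) : |f (x, n)| = |ρ x| * ((x * |w|) ^ n / n.factorial) := by
      rw [abs_mul, abs_div, abs_pow, abs_mul, Nat.abs_cast, Nat.abs_cast]
    simpa only [h_abs] using (hasSum_pow_div_factorial (x * |w|)).mul_left |ρ x|
  have hf : Summable f := Summable.of_abs <| (summable_prod_of_nonneg fun _ ↦ abs_nonneg _).mpr
    ⟨fun x ↦ (habs_fibre x).summable, hρ.congr fun x ↦ (habs_fibre x).tsum_eq.symm⟩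
  have hsum_x : HasSum (fun x ↦ ρ x * exp (x * w)) (∑' p, f p) :=
    hf.hasSum.prod_fiberwise fun x ↦ (hasSum_pow_div_factorial (x * w)).mul_left (ρ x)
  have hsum_n : HasSum (fun n ↦ (∑' x : ℕ, (x : ℝ) ^ n * ρ x) * w ^ n / n.factorial)
      (∑' p, f p) := by
    refine ((Equiv.prodComm ℕ ℕ).hasSum_iff.mpr hf.hasSum).prod_fiberwise fun n ↦ ?_
    have hfibre : Summable fun x ↦ f (x, n) :=
      hf.comp_injective fun _ _ h ↦ (Prod.ext_iff.mp h).1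
    have hfibre_sum :
        ∑' x : ℕ, f (x, n) = (∑' x : ℕ, (x : ℝ) ^ n * ρ x) * w ^ n / n.factorial := by
      rw [mul_div_assoc, ← tsum_mul_right]
      exact tsum_congr fun x ↦ by simp only [f, mul_pow]; ring
    exact hfibre_sum ▸ hfibre.hasSum
  exact hsum_x.tsum_eq ▸ hsum_n

theorem meixner_moments_egf_general
    (α c w : ℝ) (hc : 0 < c)
    (hw : c * Real.exp |w| < 1)
    (mu : ℕ → ℝ → ℝ)
    (hmu : ∀ (n : ℕ) (t : ℝ),
      mu n t = ∑' x : ℕ, (x : ℝ) ^ n * poch α x * t ^ x / x.factorial) :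
    HasSum (fun n : ℕ => mu n c * w ^ n / n.factorial)
      ((1 - c * Real.exp w) ^ (-α)) := by
  set ρ : ℕ → ℝ := fun x ↦ poch α x * c ^ x / x.factorial
  have hρ_exp (v : ℝ) (x : ℕ) :
      ρ x * exp (x * v) = poch α x * (c * exp v) ^ x / x.factorial := by
    rw [exp_nat_mul, mul_pow]
    ring
  have hρ : Summable fun x : ℕ ↦ |ρ x| * exp (x * |w|) := by
    refine (summable_abs_poch_mul_pow_div_factorial α (t := c * exp |w|) ?_).congr fun x ↦ ?_
    · rwa [abs_of_pos (by positivity)]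
    · rw [← hρ_exp, abs_mul, abs_of_pos (exp_pos _)]
  have hbinomial := hasSum_poch_mul_pow_div_factorial_s9 α (t := c * exp w) <| by
    rw [abs_of_pos (by positivity)]
    exact hw.trans_le' (by gcongr; exact le_abs_self w)
  convert hasSum_tsum_moment_mul_pow_div_factorial hρ using 1
  · ext n
    rw [hmu]
    congr 2
    exact tsum_congr fun x ↦ by ring
  · rw [← hbinomial.tsum_eq]
    exact tsum_congr fun x ↦ (hρ_exp w x).symm

/-- The exponential generating function of the Meixner moments:
`Σ_n μ_n(c) w^n/n! = (1 - c e^w)^{-α}` when `c e^{|w|} < 1`. -/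
theorem meixner_moments_egf
    (α c w : ℝ) (hα : 0 < α) (hc : 0 < c) (hc1 : c < 1)
    (hw : c * Real.exp |w| < 1)
    (mu : ℕ → ℝ → ℝ)
    (hmu : ∀ (n : ℕ) (t : ℝ),
      mu n t = ∑' x : ℕ, (x : ℝ) ^ n * poch α x * t ^ x / x.factorial) :
    HasSum (fun n : ℕ => mu n c * w ^ n / n.factorial)
      ((1 - c * Real.exp w) ^ (-α)) :=
  meixner_moments_egf_general α c w hc hw mu hmu
end

section
/- Let α > 0, β > −1, and let c be a real number. Define the moments of the generalized Meixner weight by μ_n(c) = Σ_{x=0}^∞ x^n · (α)_x · c^x/((β+1)_x · x!) for n ∈ ℕ (these series converge absolutely for every real c). Then μ₂(c) = α·c·μ₀(c) + (c − β)·μ₁(c). -/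
lemma poch_pos {a : ℝ} (ha : 0 < a) (x : ℕ) : 0 < poch a x := by
  apply Finset.prod_pos
  intro i _
  positivity

lemma poch_succ (a : ℝ) (x : ℕ) : poch a (x + 1) = poch a x * (a + x) :=
  Finset.prod_range_succ _ _

/-- The moments of the generalized Meixner weight satisfy
`μ₂(c) = α c μ₀(c) + (c - β) μ₁(c)`; the defining series converge absolutely
for all real `c`. -/
theorem generalized_meixner_moment_relation
    (α β c : ℝ) (hα : 0 < α) (hβ : β > -1)
    (mu : ℕ → ℝ → ℝ)
    (hmu : ∀ (n : ℕ) (t : ℝ),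
      mu n t = ∑' x : ℕ, (x : ℝ) ^ n * poch α x * t ^ x / (poch (β + 1) x * x.factorial)) :
    (∀ (n : ℕ) (t : ℝ),
      Summable fun x : ℕ =>
        |(x : ℝ) ^ n * poch α x * t ^ x / (poch (β + 1) x * x.factorial)|) ∧
    mu 2 c = α * c * mu 0 c + (c - β) * mu 1 c := by
  have hβ1 : (0:ℝ) < β + 1 := by linarith
  have hQpos : ∀ x : ℕ, 0 < poch (β + 1) x := poch_pos hβ1
  have hPpos : ∀ x : ℕ, 0 < poch α x := poch_pos hα
  have hfac : ∀ x : ℕ, (0:ℝ) < (x.factorial : ℝ) := fun x => by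
    exact_mod_cast x.factorial_pos
  -- absolute value formula
  have habs : ∀ (n : ℕ) (t : ℝ) (x : ℕ),
      |(x : ℝ) ^ n * poch α x * t ^ x / (poch (β + 1) x * x.factorial)|
        = (x : ℝ) ^ n * poch α x * |t| ^ x / (poch (β + 1) x * x.factorial) := by
    intro n t x
    rw [abs_div, abs_mul, abs_mul, abs_pow, abs_pow, Nat.abs_cast,
      abs_of_pos (hPpos x), abs_of_pos (mul_pos (hQpos x) (hfac x))]
  -- summability
  have hsum : ∀ (n : ℕ) (t : ℝ),
      Summable fun x : ℕ =>
        |(x : ℝ) ^ n * poch α x * t ^ x / (poch (β + 1) x * x.factorial)| := by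
    intro n t
    apply summable_of_ratio_norm_eventually_le (r := 1/2) (by norm_num)
    rw [Filter.eventually_atTop]
    refine ⟨max 1 (max ⌈α⌉₊ ⌈2 ^ (n + 3) * |t|⌉₊), fun x hx => ?_⟩
    have hx1 : 1 ≤ x := le_trans (le_max_left _ _) hx
    have hxα : α ≤ (x : ℝ) := by
      have : ⌈α⌉₊ ≤ x := le_trans (le_trans (le_max_left _ _) (le_max_right _ _)) hx
      calc α ≤ (⌈α⌉₊ : ℝ) := Nat.le_ceil α
        _ ≤ (x : ℝ) := by exact_mod_cast this
    have hxc : 2 ^ (n + 3) * |t| ≤ (x : ℝ) := by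
      have : ⌈2 ^ (n + 3) * |t|⌉₊ ≤ x :=
        le_trans (le_trans (le_max_right _ _) (le_max_right _ _)) hx
      calc 2 ^ (n + 3) * |t| ≤ (⌈2 ^ (n + 3) * |t|⌉₊ : ℝ) := Nat.le_ceil _
        _ ≤ (x : ℝ) := by exact_mod_cast this
    have hxR : (1:ℝ) ≤ (x:ℝ) := by exact_mod_cast hx1
    have hxpos : (0:ℝ) < (x:ℝ) := by linarith
    simp only [Real.norm_eq_abs, abs_abs]
    rw [habs, habs]
    -- rewrite the (x+1) term
    have hform : ((x + 1 : ℕ) : ℝ) ^ n * poch α (x + 1) * |t| ^ (x + 1)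
          / (poch (β + 1) (x + 1) * (x + 1).factorial)
        = (((x:ℝ) + 1) ^ n * (α + x) * |t| / ((β + 1 + x) * ((x:ℝ) + 1)))
          * (poch α x * |t| ^ x / (poch (β + 1) x * x.factorial)) := by
      rw [poch_succ, poch_succ, Nat.factorial_succ]
      push_cast
      field_simp
      ring
    rw [hform]
    have ha : 0 ≤ poch α x * |t| ^ x / (poch (β + 1) x * x.factorial) :=
      div_nonneg (mul_nonneg (hPpos x).le (by positivity)) (mul_pos (hQpos x) (hfac x)).le
    have hmain : ((x:ℝ) + 1) ^ n * (α + x) * |t| / ((β + 1 + x) * ((x:ℝ) + 1))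
        ≤ 1 / 2 * (x:ℝ) ^ n := by
      rw [div_le_iff₀ (by nlinarith)]
      have h1 : ((x:ℝ) + 1) ^ n ≤ (2 * x) ^ n := by
        apply pow_le_pow_left₀ (by linarith)
        linarith
      have h2 : α + (x:ℝ) ≤ 2 * x := by linarith
      calc ((x:ℝ) + 1) ^ n * (α + x) * |t|
          ≤ (2 * x) ^ n * (2 * x) * |t| := by
            apply mul_le_mul _ le_rfl (abs_nonneg t) (by positivity)
            apply mul_le_mul h1 h2 (by linarith) (by positivity)
        _ = 2 ^ n * 2 * |t| * ((x:ℝ) ^ n * x) := by ring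
        _ ≤ (1 / 4 * ((x:ℝ) + 1)) * ((x:ℝ) ^ n * x) := by
            apply mul_le_mul_of_nonneg_right _ (by positivity)
            have : 2 ^ (n + 3) * |t| ≤ (x:ℝ) + 1 := by linarith
            calc 2 ^ n * 2 * |t| = 1 / 4 * (2 ^ (n + 3) * |t|) := by ring
              _ ≤ 1 / 4 * ((x:ℝ) + 1) := by linarith
        _ = ((x:ℝ) ^ n * ((x:ℝ) + 1)) * ((x:ℝ) / 4) := by ring
        _ ≤ ((x:ℝ) ^ n * ((x:ℝ) + 1)) * ((β + 1 + (x:ℝ)) / 2) := by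
            apply mul_le_mul_of_nonneg_left (by linarith) (by positivity)
        _ = 1 / 2 * (x:ℝ) ^ n * ((β + 1 + x) * ((x:ℝ) + 1)) := by ring
    calc (((x:ℝ) + 1) ^ n * (α + x) * |t| / ((β + 1 + x) * ((x:ℝ) + 1)))
          * (poch α x * |t| ^ x / (poch (β + 1) x * x.factorial))
        ≤ (1 / 2 * (x:ℝ) ^ n) * (poch α x * |t| ^ x / (poch (β + 1) x * x.factorial)) :=
          mul_le_mul_of_nonneg_right hmain ha
      _ = 1 / 2 * ((x:ℝ) ^ n * poch α x * |t| ^ x / (poch (β + 1) x * x.factorial)) := by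
          ring
  refine ⟨hsum, ?_⟩
  -- the weight
  set w : ℕ → ℝ := fun x => poch α x * c ^ x / (poch (β + 1) x * x.factorial) with hw
  have hterm : ∀ (n : ℕ) (x : ℕ),
      (x : ℝ) ^ n * poch α x * c ^ x / (poch (β + 1) x * x.factorial)
        = (x : ℝ) ^ n * w x := by
    intro n x
    simp only [hw]
    ring
  have hSn : ∀ n : ℕ, Summable fun x : ℕ => (x : ℝ) ^ n * w x := by
    intro n
    apply Summable.of_abs
    have := hsum n c
    apply this.congr
    intro x
    rw [hterm]
  have S0 : Summable w := by
    have := hSn 0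
    simpa using this
  have S1 : Summable fun x : ℕ => (x : ℝ) * w x := by
    have := hSn 1
    simpa using this
  have S2 : Summable fun x : ℕ => (x : ℝ) ^ 2 * w x := hSn 2
  -- key recurrence
  have key : ∀ x : ℕ, ((x:ℝ) + 1) * (((x:ℝ) + 1) + β) * w (x + 1) = c * (α + x) * w x := by
    intro x
    simp only [hw]
    rw [poch_succ, poch_succ, Nat.factorial_succ]
    have h1 := (hQpos x).ne'
    have h2 := (hfac x).ne'
    push_cast
    field_simp
    ring
  -- the shifted function
  have hh : Summable fun x : ℕ => (x:ℝ) * ((x:ℝ) + β) * w x := by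
    apply Summable.congr (f := fun x : ℕ => (x:ℝ) ^ 2 * w x + β * ((x:ℝ) * w x))
    · exact S2.add (S1.mul_left β)
    · intro x; ring
  have hL : (∑' x : ℕ, (x:ℝ) ^ 2 * w x) + β * (∑' x : ℕ, (x:ℝ) * w x)
      = α * c * (∑' x : ℕ, w x) + c * (∑' x : ℕ, (x:ℝ) * w x) := by
    have e1 : (∑' x : ℕ, (x:ℝ) ^ 2 * w x) + β * (∑' x : ℕ, (x:ℝ) * w x)
        = ∑' x : ℕ, (x:ℝ) * ((x:ℝ) + β) * w x := by
      rw [← tsum_mul_left, ← Summable.tsum_add S2 (S1.mul_left β)]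
      exact tsum_congr fun x => by ring
    have e2 : (∑' x : ℕ, (x:ℝ) * ((x:ℝ) + β) * w x)
        = ∑' x : ℕ, (((x:ℝ) + 1) * (((x:ℝ) + 1) + β) * w (x + 1)) := by
      rw [Summable.tsum_eq_zero_add hh]
      push_cast
      simp
    have e3 : (∑' x : ℕ, (((x:ℝ) + 1) * (((x:ℝ) + 1) + β) * w (x + 1)))
        = ∑' x : ℕ, (c * α * w x + c * ((x:ℝ) * w x)) := by
      exact tsum_congr fun x => by rw [key]; ring
    have e4 : (∑' x : ℕ, (c * α * w x + c * ((x:ℝ) * w x)))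
        = α * c * (∑' x : ℕ, w x) + c * (∑' x : ℕ, (x:ℝ) * w x) := by
      rw [Summable.tsum_add (S0.mul_left _) (S1.mul_left _), tsum_mul_left, tsum_mul_left]
      ring
    rw [e1, e2, e3, e4]
  have hmu0 : mu 0 c = ∑' x : ℕ, w x := by
    rw [hmu]
    exact tsum_congr fun x => by rw [hterm]; simp
  have hmu1 : mu 1 c = ∑' x : ℕ, (x:ℝ) * w x := by
    rw [hmu]
    exact tsum_congr fun x => by rw [hterm]; simp
  have hmu2 : mu 2 c = ∑' x : ℕ, (x:ℝ) ^ 2 * w x := by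
    rw [hmu]
    exact tsum_congr fun x => by rw [hterm]
  rw [hmu0, hmu1, hmu2]
  linarith [hL]
end

section
/- Let α ∈ ℝ, N ∈ ℕ, and c ∈ ℝ. Define the moments of the generalized Krawtchouk weight by μ_n(c) = Σ_{x=0}^N x^n · (α)_x · (−N)_x · c^x/x! for n ∈ ℕ (note that (−N)_x = 0 for x > N, so the sum is finite). Then c·μ₂(c) = α·N·c·μ₀(c) + ((N − α)·c + 1)·μ₁(c). -/
/-- The moments of the generalized Krawtchouk weight satisfy
`c μ₂(c) = α N c μ₀(c) + ((N - α) c + 1) μ₁(c)`. -/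
theorem generalized_krawtchouk_moment_relation
    (α : ℝ) (N : ℕ) (c : ℝ)
    (mu : ℕ → ℝ → ℝ)
    (hmu : ∀ (n : ℕ) (t : ℝ),
      mu n t = ∑ x ∈ Finset.range (N + 1),
        (x : ℝ) ^ n * poch α x * poch (-(N : ℝ)) x * t ^ x / x.factorial) :
    c * mu 2 c = α * N * c * mu 0 c + ((N - α) * c + 1) * mu 1 c := by
  set T : ℕ → ℝ := fun x => poch α x * poch (-(N : ℝ)) x * c ^ x / x.factorial with hT
  have hstep : ∀ x : ℕ, ((x : ℝ) + 1) * T (x + 1)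
      = c * (α + x) * ((x : ℝ) - N) * T x := by
    intro x
    have hf : ((x + 1).factorial : ℝ) = (x.factorial : ℝ) * ((x : ℝ) + 1) := by
      rw [Nat.factorial_succ]; push_cast; ring
    have hx : (x.factorial : ℝ) ≠ 0 := Nat.cast_ne_zero.mpr x.factorial_ne_zero
    have hx1 : (x : ℝ) + 1 ≠ 0 := by positivity
    simp only [hT, poch_succ, hf, pow_succ]
    field_simp
    ring
  have key : ∑ x ∈ Finset.range (N + 1), (x : ℝ) * T x
      = ∑ x ∈ Finset.range (N + 1), c * (α + x) * ((x : ℝ) - N) * T x := by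
    rw [Finset.sum_range_succ' (fun x => (x : ℝ) * T x) N,
      Finset.sum_range_succ (fun x => c * (α + x) * ((x : ℝ) - N) * T x) N]
    have h0 : c * (α + (N : ℝ)) * ((N : ℝ) - N) * T N = 0 := by simp
    rw [h0, Nat.cast_zero, zero_mul, add_zero, add_zero]
    refine Finset.sum_congr rfl fun x _ => ?_
    push_cast
    exact hstep x
  rw [hmu, hmu, hmu]
  have hterm : ∀ x ∈ Finset.range (N + 1),
      c * ((x : ℝ) ^ 2 * poch α x * poch (-(N : ℝ)) x * c ^ x / x.factorial)
      = (α * N * c * ((x : ℝ) ^ 0 * poch α x * poch (-(N : ℝ)) x * c ^ x / x.factorial)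
        + ((N - α) * c + 1) * ((x : ℝ) ^ 1 * poch α x * poch (-(N : ℝ)) x * c ^ x / x.factorial))
        + (c * (α + x) * ((x : ℝ) - N) * T x - (x : ℝ) * T x) := by
    intro x _
    simp only [hT]
    ring
  rw [Finset.mul_sum, Finset.sum_congr rfl hterm, Finset.sum_add_distrib,
    Finset.sum_sub_distrib, ← key, sub_self, add_zero, Finset.sum_add_distrib,
    ← Finset.mul_sum, ← Finset.mul_sum]
end

section
/- Let c be a real number and let z < 0 be a real number. Then the Stieltjes transform of the Charlier weight satisfies Σ_{x=0}^∞ (c^x/x!)·(1/(z − x)) = −∫_0^1 e^{c·t} · t^{−z−1} dt, where the series on the left converges absolutely and the integral on the right is finite. -/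
open MeasureTheory

private lemma charlier_aux_int (c z : ℝ) (hz : z < 0) :
    MeasureTheory.IntegrableOn (fun t : ℝ => Real.exp (c * t) * t ^ (-z - 1))
      (Set.Ioc (0 : ℝ) 1) := by
  have h1 : IntegrableOn (fun t : ℝ => t ^ (-z - 1)) (Set.Ioc (0 : ℝ) 1) := by
    have := intervalIntegral.intervalIntegrable_rpow' (a := 0) (b := 1) (r := -z - 1)
      (by linarith)
    rwa [intervalIntegrable_iff_integrableOn_Ioc_of_le (by norm_num)] at this
  refine h1.bdd_mul (c := Real.exp |c|) ?_ ?_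
  · exact (Real.continuous_exp.comp (continuous_const.mul continuous_id)).aestronglyMeasurable
  · rw [MeasureTheory.ae_restrict_iff' measurableSet_Ioc]
    filter_upwards with t ht
    rw [Real.norm_eq_abs, Real.abs_exp]
    apply Real.exp_le_exp.2
    calc c * t ≤ |c * t| := le_abs_self _
      _ = |c| * |t| := abs_mul c t
      _ = |c| * t := by rw [abs_of_pos ht.1]
      _ ≤ |c| * 1 := by have := abs_nonneg c; nlinarith [ht.2]
      _ = |c| := mul_one _

/-- The Stieltjes transform of the Charlier weight:
for `z < 0`, `Σ_{x=0}^∞ (c^x/x!) (1/(z-x)) = -∫_0^1 e^{ct} t^{-z-1} dt`,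
with the series converging absolutely and the integral finite. -/
theorem charlier_stieltjes_transform (c z : ℝ) (hz : z < 0) :
    Summable (fun x : ℕ => |c ^ x / x.factorial * (1 / (z - x))|) ∧
    MeasureTheory.IntegrableOn (fun t : ℝ => Real.exp (c * t) * t ^ (-z - 1))
      (Set.Ioc (0 : ℝ) 1) ∧
    ∑' x : ℕ, c ^ x / x.factorial * (1 / (z - x)) =
      -∫ t in (0 : ℝ)..1, Real.exp (c * t) * t ^ (-z - 1) := by
  have hxz : ∀ x : ℕ, 0 < (x : ℝ) - z := fun x => by
    have : (0:ℝ) ≤ x := Nat.cast_nonneg x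
    linarith
  -- bound on coefficient
  have hfrac : ∀ x : ℕ, 1 / ((x:ℝ) - z) ≤ (-z)⁻¹ := by
    intro x
    rw [← one_div]
    exact one_div_le_one_div_of_le (by linarith)
      (by have : (0:ℝ) ≤ x := Nat.cast_nonneg x; linarith)
  have hbound : ∀ x : ℕ, |c ^ x / x.factorial * (1 / (z - x))| ≤ |c| ^ x / x.factorial * (-z)⁻¹ := by
    intro x
    have habs : |z - (x:ℝ)| = (x:ℝ) - z := by
      rw [abs_of_nonpos (by linarith [hxz x])]; ring
    rw [abs_mul, abs_div, abs_pow, Nat.abs_cast, abs_div, abs_one, habs]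
    exact mul_le_mul_of_nonneg_left (hfrac x) (by positivity)
  have hsummable_bound : Summable (fun x : ℕ => |c| ^ x / x.factorial * (-z)⁻¹) :=
    (Real.summable_pow_div_factorial |c|).mul_right _
  have hsum : Summable (fun x : ℕ => |c ^ x / x.factorial * (1 / (z - x))|) :=
    Summable.of_nonneg_of_le (fun x => abs_nonneg _) hbound hsummable_bound
  refine ⟨hsum, charlier_aux_int c z hz, ?_⟩
  -- the family of functions
  set F : ℕ → ℝ → ℝ := fun x t => c ^ x / x.factorial * t ^ ((x : ℝ) - z - 1) with hF
  have hexp : ∀ x : ℕ, (-1 : ℝ) < (x : ℝ) - z - 1 := fun x => by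
    have : (0:ℝ) ≤ x := Nat.cast_nonneg x
    linarith
  have hFint : ∀ x : ℕ, IntegrableOn (F x) (Set.Ioc (0:ℝ) 1) := by
    intro x
    have := intervalIntegral.intervalIntegrable_rpow' (a := 0) (b := 1) (r := (x:ℝ) - z - 1)
      (hexp x)
    rw [intervalIntegrable_iff_integrableOn_Ioc_of_le (by norm_num)] at this
    exact this.const_mul _
  -- value of the integral of t^(x - z - 1)
  have hrint : ∀ x : ℕ, ∫ t in Set.Ioc (0:ℝ) 1, t ^ ((x:ℝ) - z - 1) = 1 / ((x:ℝ) - z) := by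
    intro x
    rw [← intervalIntegral.integral_of_le (by norm_num : (0:ℝ) ≤ 1),
      integral_rpow (Or.inl (hexp x))]
    have h0 : (0:ℝ) ^ ((x:ℝ) - z - 1 + 1) = 0 := by
      rw [Real.zero_rpow (by linarith [hxz x])]
    rw [h0, Real.one_rpow]
    have h2 : (x:ℝ) - z - 1 + 1 = (x:ℝ) - z := by ring
    rw [h2]
    norm_num
  have hFval : ∀ x : ℕ, ∫ t in Set.Ioc (0:ℝ) 1, F x t = c ^ x / x.factorial * (1 / ((x:ℝ) - z)) := by
    intro x
    rw [hF]
    simp only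
    rw [MeasureTheory.integral_const_mul, hrint x]
  -- norms of the integrals
  have hFnorm : ∀ x : ℕ, ∫ t in Set.Ioc (0:ℝ) 1, ‖F x t‖ =
      |c ^ x / x.factorial| * (1 / ((x:ℝ) - z)) := by
    intro x
    have : ∀ t ∈ Set.Ioc (0:ℝ) 1, ‖F x t‖ = |c ^ x / x.factorial| * t ^ ((x:ℝ) - z - 1) := by
      intro t ht
      rw [hF]
      simp only [Real.norm_eq_abs, abs_mul]
      rw [abs_of_nonneg (Real.rpow_nonneg ht.1.le _)]
    rw [MeasureTheory.setIntegral_congr_fun measurableSet_Ioc this,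
      MeasureTheory.integral_const_mul, hrint x]
  have hFnormsum : Summable (fun x : ℕ => ∫ t in Set.Ioc (0:ℝ) 1, ‖F x t‖) := by
    apply Summable.of_nonneg_of_le
      (fun x => integral_nonneg fun t => norm_nonneg _)
      (fun x => ?_) hsummable_bound
    rw [hFnorm x, abs_div, abs_pow, Nat.abs_cast]
    exact mul_le_mul_of_nonneg_left (hfrac x) (by positivity)
  -- swap sum and integral
  have hswap := MeasureTheory.integral_tsum_of_summable_integral_norm hFint hFnormsum
  -- pointwise sum identity on Ioc 0 1
  have hpt : ∀ t ∈ Set.Ioc (0:ℝ) 1, (∑' x : ℕ, F x t) = Real.exp (c * t) * t ^ (-z - 1) := by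
    intro t ht
    have htpos : 0 < t := ht.1
    have h1 : ∀ x : ℕ, F x t = (c * t) ^ x / x.factorial * t ^ (-z - 1) := by
      intro x
      rw [hF]
      simp only
      have : (x:ℝ) - z - 1 = (x:ℝ) + (-z - 1) := by ring
      rw [this, Real.rpow_add htpos, Real.rpow_natCast, mul_pow]
      ring
    simp_rw [h1]
    rw [tsum_mul_right]
    congr 1
    rw [Real.exp_eq_exp_ℝ, NormedSpace.exp_eq_tsum_div]
  have hint_eq : ∫ t in Set.Ioc (0:ℝ) 1, (∑' x : ℕ, F x t) =
      ∫ t in Set.Ioc (0:ℝ) 1, Real.exp (c * t) * t ^ (-z - 1) :=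
    MeasureTheory.setIntegral_congr_fun measurableSet_Ioc hpt
  have hlhs : ∀ x : ℕ, c ^ x / x.factorial * (1 / (z - x)) =
      -(c ^ x / x.factorial * (1 / ((x:ℝ) - z))) := by
    intro x
    have h : z - (x:ℝ) = -((x:ℝ) - z) := by ring
    rw [h, one_div, inv_neg, ← one_div, mul_neg]
  calc ∑' x : ℕ, c ^ x / x.factorial * (1 / (z - x))
      = ∑' x : ℕ, -(c ^ x / x.factorial * (1 / ((x:ℝ) - z))) := by
        exact tsum_congr hlhs
    _ = -∑' x : ℕ, (c ^ x / x.factorial * (1 / ((x:ℝ) - z))) := tsum_neg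
    _ = -∑' x : ℕ, ∫ t in Set.Ioc (0:ℝ) 1, F x t := by simp_rw [hFval]
    _ = -∫ t in Set.Ioc (0:ℝ) 1, (∑' x : ℕ, F x t) := by rw [hswap]
    _ = -∫ t in Set.Ioc (0:ℝ) 1, Real.exp (c * t) * t ^ (-z - 1) := by rw [hint_eq]
    _ = -∫ t in (0:ℝ)..1, Real.exp (c * t) * t ^ (-z - 1) := by
        rw [intervalIntegral.integral_of_le (by norm_num : (0:ℝ) ≤ 1)]
end
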